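/- The piecewise function u above is the unique minimizer of J(v) = ∫_{−1}^{1} ((1/2)(v')² + 8|v|) dx over all v ∈ H¹(−1,1) with v(−1) = −1, v(1) = 1. -/

import Mathlib

/-!
Write `v = uTP + w`, so `w(±1) = 0` and `w' = g - uTP'`, and let `s` be the selection of the
subdifferential of `|·|` along `uTP` with `uTP'' = 8 s` away from `±1/2`. Convexity of `½ t²`
and `|s| ≤ 1`, `|uTP| = s uTP` give pointwise
`½ g² + 8 |v| ≥ ½ uTP'² + 8 |uTP| + (uTP' w' + 8 s w) + ½ (w')²`.
Integrating `uTP' w'` by parts (both factors are absolutely continuous) turns it into `-∫ 8 s w`,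
so the first variation vanishes and `J v ≥ J uTP + ½ ∫ (w')²`. Equality forces `w' = 0` a.e.,
hence `w = 0`.
-/

open MeasureTheory intervalIntegral Set

noncomputable def uTP (x : ℝ) : ℝ :=
  if x ≤ -(1/2) then -4*x^2 - 4*x - 1
  else if x ≤ 1/2 then 0
  else 4*x^2 - 4*x + 1

theorem AbsolutelyContinuousOnInterval.integral_mul_eq_sub_integral_deriv_mul_primitive
    {ψ φ : ℝ → ℝ} {a b : ℝ} (hψ : AbsolutelyContinuousOnInterval ψ a b)
    (hφ : IntervalIntegrable φ volume a b) :
    ∫ x in a..b, ψ x * φ x =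
      ψ b * (∫ t in a..b, φ t) - ∫ x in a..b, deriv ψ x * ∫ t in a..x, φ t := by
  have hΦ := hφ.absolutelyContinuousOnInterval_intervalIntegral (c := a) left_mem_uIcc
  have hderiv :
      ∫ x in a..b, ψ x * φ x =
        ∫ x in a..b, ψ x * deriv (fun y => ∫ t in a..y, φ t) x := by
    refine integral_congr_ae ?_
    filter_upwards [hφ.ae_hasDerivAt_integral] with x hx hxab
    rw [(hx (uIoc_subset_uIcc hxab) a left_mem_uIcc).deriv]
  rw [hderiv, hψ.integral_mul_deriv_eq_deriv_mul hΦ, integral_same, mul_zero, sub_zero]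

theorem MeasureTheory.MemLp.intervalIntegrable_of_restrict_Ioo {g : ℝ → ℝ} {a b : ℝ}
    (hab : a ≤ b)
    (hg : MemLp g 2 (volume.restrict (Ioo a b))) :
    IntervalIntegrable g volume a b ∧ IntervalIntegrable (fun x => g x ^ 2) volume a b :=
  ⟨(intervalIntegrable_iff_integrableOn_Ioo_of_le hab).2 (hg.integrable one_le_two),
    (intervalIntegrable_iff_integrableOn_Ioo_of_le hab).2 hg.integrable_sq⟩

theorem ContinuousOn.of_eq_add_integral {v g : ℝ → ℝ} {a b : ℝ}
    (hg : IntervalIntegrable g volume a b)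
    (hrep : ∀ x ∈ uIcc a b, v x = v a + ∫ t in a..x, g t) : ContinuousOn v (uIcc a b) :=
  (continuousOn_const.add (continuousOn_primitive_interval' hg left_mem_uIcc)).congr hrep

theorem intervalIntegrable_energy {v g : ℝ → ℝ} {a b : ℝ} (κ : ℝ)
    (hg : IntervalIntegrable (fun x => g x ^ 2) volume a b) (hv : ContinuousOn v (uIcc a b)) :
    IntervalIntegrable (fun x => 1/2 * g x ^ 2 + κ * |v x|) volume a b :=
  (hg.const_mul _).add (hv.intervalIntegrable.abs.const_mul _)

theorem integral_eq_zero_of_mul_sq_le {f R : ℝ → ℝ} {a b c : ℝ} (hab : a ≤ b) (hc : 0 < c)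
    (hR : IntervalIntegrable R volume a b) (hfR : ∀ x ∈ Icc a b, c * f x ^ 2 ≤ R x)
    (hR0 : ∫ x in a..b, R x = 0) : ∀ x ∈ Icc a b, ∫ t in a..x, f t = 0 := by
  have hRpos : ∀ x ∈ Ioc a b, 0 ≤ R x := fun x hx =>
    (by positivity : 0 ≤ c * f x ^ 2).trans (hfR x (Ioc_subset_Icc_self hx))
  have hRae := (integral_eq_zero_iff_of_le_of_nonneg_ae hab
    ((ae_restrict_iff' measurableSet_Ioc).2 (.of_forall hRpos)) hR).1 hR0
  have hf : ∀ᵐ t ∂volume.restrict (Ioc a b), f t = 0 := by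
    filter_upwards [hRae, ae_restrict_mem measurableSet_Ioc] with t hRt ht
    have := hfR t (Ioc_subset_Icc_self ht)
    rw [hRt, Pi.zero_apply] at this
    exact pow_eq_zero_iff two_ne_zero |>.1 (le_antisymm (by nlinarith) (sq_nonneg _))
  intro x hx
  rw [integral_of_le hx.1]
  exact integral_eq_zero_of_ae <|
    ae_restrict_of_ae_restrict_of_subset (Ioc_subset_Ioc_right hx.2) hf

theorem half_sq_sub_le_energy_sub {a b p q σ κ : ℝ} (hκ : 0 ≤ κ) (hp : |p| = σ * p)
    (hσ : |σ| ≤ 1) :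
    1/2 * (b - a) ^ 2 ≤
      (1/2 * b ^ 2 + κ * |q|) -
        ((1/2 * a ^ 2 + κ * |p|) + (a * (b - a) + κ * σ * (q - p))) := by
  have hσq : σ * q ≤ |q| :=
    (le_abs_self _).trans (by rw [abs_mul]; exact mul_le_of_le_one_left (abs_nonneg q) hσ)
  rw [hp]
  nlinarith [mul_le_mul_of_nonneg_left hσq hκ]

noncomputable def uTP' (x : ℝ) : ℝ := 4 * (|x + 1/2| + |x - 1/2|) - 4

noncomputable def sTP (x : ℝ) : ℝ := if x ≤ -(1/2) then -1 else if x ≤ 1/2 then 0 else 1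

lemma uTP_eq_mul_abs (x : ℝ) :
    uTP x = 2 * ((x + 1/2) * |x + 1/2| + (x - 1/2) * |x - 1/2|) - 4 * x := by
  unfold uTP
  split_ifs
  · rw [abs_of_nonpos (by linarith), abs_of_nonpos (by linarith)]; ring
  · rw [abs_of_nonneg (by linarith), abs_of_nonpos (by linarith)]; ring
  · rw [abs_of_nonneg (by linarith), abs_of_nonneg (by linarith)]; ring

lemma hasDerivAt_mul_abs (x : ℝ) : HasDerivAt (fun t : ℝ => t * |t|) (2 * |x|) x := by
  refine hasDerivAt_of_hasDerivAt_of_ne' (x := 0) (f := fun t : ℝ => t * |t|)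
    (g := fun t => 2 * |t|) (fun y hy => ?_) (continuous_id.mul continuous_abs).continuousAt
    (continuous_const.mul continuous_abs).continuousAt x
  refine ((hasDerivAt_id y).mul (hasDerivAt_abs hy)).congr_deriv ?_
  rw [id_eq, self_mul_sign]; ring

lemma hasDerivAt_uTP (x : ℝ) : HasDerivAt uTP (uTP' x) x := by
  have h := (((hasDerivAt_mul_abs _).comp_add_const x (1/2)).add
    ((hasDerivAt_mul_abs _).comp_sub_const x (1/2))).const_mul 2 |>.sub
    ((hasDerivAt_id x).const_mul 4)
  refine (h.congr_deriv ?_).congr_of_eventuallyEq (Filter.Eventually.of_forall fun y => ?_)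
  · simp only [uTP']; ring
  · rw [uTP_eq_mul_abs]; rfl

lemma continuous_uTP : Continuous uTP :=
  continuous_iff_continuousAt.2 fun x => (hasDerivAt_uTP x).continuousAt

lemma deriv_uTP : deriv uTP = uTP' := funext fun x => (hasDerivAt_uTP x).deriv

lemma continuous_uTP' : Continuous uTP' := by unfold uTP'; fun_prop

lemma lipschitzWith_uTP' : LipschitzWith 8 uTP' := LipschitzWith.of_dist_le_mul fun x y => by
  have h₁ : |(|x + 1/2| - |y + 1/2|)| ≤ |x - y| := by
    simpa using abs_abs_sub_abs_le_abs_sub (x + 1/2) (y + 1/2)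
  have h₂ : |(|x - 1/2| - |y - 1/2|)| ≤ |x - y| := by
    simpa using abs_abs_sub_abs_le_abs_sub (x - 1/2) (y - 1/2)
  simp only [Real.dist_eq, uTP', NNReal.coe_ofNat]
  rw [abs_le] at *
  constructor <;> linarith

lemma hasDerivAt_uTP' {x : ℝ} (h₁ : x ≠ -(1/2)) (h₂ : x ≠ 1/2) :
    HasDerivAt uTP' (8 * sTP x) x := by
  have hp := (hasDerivAt_abs (x := x + 1/2) (by contrapose! h₁; linarith)).comp_add_const x (1/2)
  have hm := (hasDerivAt_abs (x := x - 1/2) (by contrapose! h₂; linarith)).comp_sub_const x (1/2)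
  have h := ((hp.add hm).const_mul 4).sub_const 4
  refine h.congr_deriv ?_
  unfold sTP
  split_ifs
  · rw [sign_neg (by contrapose! h₁; linarith), sign_neg (by linarith)]; norm_num
  · rw [sign_pos (by contrapose! h₁; linarith), sign_neg (by contrapose! h₂; linarith)]
    norm_num
  · rw [sign_pos (by linarith), sign_pos (by linarith)]; norm_num

lemma deriv_uTP'_ae : ∀ᵐ x, deriv uTP' x = 8 * sTP x := by
  have : ({-(1/2), 1/2} : Set ℝ).Countable := (toFinite _).countable
  filter_upwards [measure_eq_zero_iff_ae_notMem.1 (this.measure_zero volume)] with x hx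
  simp only [mem_insert_iff, mem_singleton_iff, not_or] at hx
  exact (hasDerivAt_uTP' hx.1 hx.2).deriv

lemma abs_uTP (x : ℝ) : |uTP x| = sTP x * uTP x := by
  unfold uTP sTP
  split_ifs
  · rw [abs_of_nonpos (by nlinarith)]; ring
  · simp
  · rw [abs_of_nonneg (by nlinarith)]; ring

lemma abs_sTP_le_one (x : ℝ) : |sTP x| ≤ 1 := by
  unfold sTP; split_ifs <;> norm_num

lemma monotone_sTP : Monotone sTP := by
  intro x y hxy
  unfold sTP
  split_ifs <;> linarith

lemma uTP_neg_one : uTP (-1) = -1 := by norm_num [uTP]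

lemma uTP_one : uTP 1 = 1 := by norm_num [uTP]

lemma sub_uTP_eq_integral {v g : ℝ → ℝ} (hg : IntervalIntegrable g volume (-1) 1)
    (hrep : ∀ x ∈ Icc (-1:ℝ) 1, v x = v (-1) + ∫ t in (-1:ℝ)..x, g t) (hbl : v (-1) = -1)
    {x : ℝ} (hx : x ∈ Icc (-1:ℝ) 1) :
    v x - uTP x = ∫ t in (-1:ℝ)..x, (g t - uTP' t) := by
  have hgx : IntervalIntegrable g volume (-1) x :=
    hg.mono_set (by rw [uIcc_of_le hx.1, uIcc_of_le (by norm_num)]; exact Icc_subset_Icc_right hx.2)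
  rw [integral_sub hgx (continuous_uTP'.intervalIntegrable _ _),
    integral_eq_sub_of_hasDerivAt (fun t _ => hasDerivAt_uTP t)
      (continuous_uTP'.intervalIntegrable _ _),
    hrep x hx, hbl, uTP_neg_one]
  ring

noncomputable def firstVariationDensity (φ : ℝ → ℝ) (x : ℝ) : ℝ :=
  uTP' x * φ x + 8 * sTP x * ∫ t in (-1:ℝ)..x, φ t

lemma intervalIntegrable_firstVariationDensity {φ : ℝ → ℝ}
    (hφ : IntervalIntegrable φ volume (-1) 1) :
    IntervalIntegrable (firstVariationDensity φ) volume (-1) 1 :=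
  (hφ.continuousOn_mul continuous_uTP'.continuousOn).add
    ((monotone_sTP.intervalIntegrable.const_mul 8).mul_continuousOn
      (continuousOn_primitive_interval' hφ left_mem_uIcc))

lemma integral_firstVariationDensity_eq_zero {φ : ℝ → ℝ}
    (hφ : IntervalIntegrable φ volume (-1) 1) (hφ0 : ∫ t in (-1:ℝ)..1, φ t = 0) :
    ∫ x in (-1:ℝ)..1, firstVariationDensity φ x = 0 := by
  have hac :=
    lipschitzWith_uTP'.lipschitzOnWith (s := uIcc (-1) 1) |>.absolutelyContinuousOnInterval
  have hparts : ∫ x in (-1:ℝ)..1, uTP' x * φ x =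
      -∫ x in (-1:ℝ)..1, 8 * sTP x * ∫ t in (-1:ℝ)..x, φ t := by
    rw [hac.integral_mul_eq_sub_integral_deriv_mul_primitive hφ, hφ0, mul_zero, zero_sub]
    congr 1
    refine integral_congr_ae ?_
    filter_upwards [deriv_uTP'_ae] with x hx _
    rw [hx]
  unfold firstVariationDensity
  rw [integral_add (hφ.continuousOn_mul continuous_uTP'.continuousOn)
    ((monotone_sTP.intervalIntegrable.const_mul 8).mul_continuousOn
      (continuousOn_primitive_interval' hφ left_mem_uIcc)), hparts, neg_add_cancel]

/-- `uTP` is the unique minimizer of `J(v) = ∫ ((1/2)(v')² + 8|v|)` over all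
`v ∈ H¹(−1,1)` with `v(−1) = −1`, `v(1) = 1`.  An `H¹` function is encoded as an
absolutely continuous function `v` with weak derivative `g ∈ L²`. -/
theorem two_phase_1d_minimizer
    (v g : ℝ → ℝ)
    -- `v ∈ H¹(−1,1)` with weak derivative `g ∈ L²(−1,1)`
    (hg : MemLp g 2 (volume.restrict (Set.Ioo (-1:ℝ) 1)))
    (hrep : ∀ x ∈ Set.Icc (-1:ℝ) 1, v x = v (-1) + ∫ t in (-1:ℝ)..x, g t)
    -- boundary conditions
    (hbl : v (-1) = -1) (hbr : v 1 = 1) :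
    (∫ x in (-1:ℝ)..1, ((1/2) * (deriv uTP x)^2 + 8 * |uTP x|)) ≤
      (∫ x in (-1:ℝ)..1, ((1/2) * (g x)^2 + 8 * |v x|)) ∧
    ((∫ x in (-1:ℝ)..1, ((1/2) * (g x)^2 + 8 * |v x|)) =
      (∫ x in (-1:ℝ)..1, ((1/2) * (deriv uTP x)^2 + 8 * |uTP x|)) →
      ∀ x ∈ Set.Icc (-1:ℝ) 1, v x = uTP x) := by
  have h01 : (-1:ℝ) ≤ 1 := by norm_num
  obtain ⟨hgi, hg2i⟩ := hg.intervalIntegrable_of_restrict_Ioo h01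
  set φ : ℝ → ℝ := fun x => g x - uTP' x
  have hφi : IntervalIntegrable φ volume (-1) 1 :=
    hgi.sub (continuous_uTP'.intervalIntegrable _ _)
  have hw : ∀ x ∈ Icc (-1:ℝ) 1, v x - uTP x = ∫ t in (-1:ℝ)..x, φ t :=
    fun x hx => sub_uTP_eq_integral hgi hrep hbl hx
  have hφ0 : ∫ t in (-1:ℝ)..1, φ t = 0 := by
    rw [← hw 1 ⟨h01, le_rfl⟩, hbr, uTP_one, sub_self]
  have hJv := intervalIntegrable_energy 8 hg2i (.of_eq_add_integral hgi (by rwa [uIcc_of_le h01]))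
  have hJu := intervalIntegrable_energy 8 ((continuous_uTP'.pow 2).intervalIntegrable (-1) 1)
    continuous_uTP.continuousOn
  set R : ℝ → ℝ := fun x =>
    (1/2 * g x ^ 2 + 8 * |v x|) - ((1/2 * uTP' x ^ 2 + 8 * |uTP x|) + firstVariationDensity φ x)
  have hR : ∀ x ∈ Icc (-1:ℝ) 1, 1/2 * φ x ^ 2 ≤ R x := fun x hx => by
    simp only [R, firstVariationDensity, ← hw x hx]
    exact half_sq_sub_le_energy_sub (by norm_num) (abs_uTP x) (abs_sTP_le_one x)
  have hRi : IntervalIntegrable R volume (-1) 1 :=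
    hJv.sub (hJu.add (intervalIntegrable_firstVariationDensity hφi))
  have hRint : ∫ x in (-1:ℝ)..1, R x =
      (∫ x in (-1:ℝ)..1, (1/2 * g x ^ 2 + 8 * |v x|)) -
        ∫ x in (-1:ℝ)..1, (1/2 * uTP' x ^ 2 + 8 * |uTP x|) := by
    simp only [R]
    rw [integral_sub hJv (hJu.add (intervalIntegrable_firstVariationDensity hφi)),
      integral_add hJu (intervalIntegrable_firstVariationDensity hφi),
      integral_firstVariationDensity_eq_zero hφi hφ0, add_zero]
  rw [deriv_uTP]
  refine ⟨?_, fun heq x hx => ?_⟩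
  · have : 0 ≤ ∫ x in (-1:ℝ)..1, R x :=
      integral_nonneg h01 fun x hx => (by positivity : 0 ≤ 1/2 * φ x ^ 2).trans (hR x hx)
    linarith
  · have hR0 : ∫ x in (-1:ℝ)..1, R x = 0 := by linarith
    linarith [hw x hx, integral_eq_zero_of_mul_sq_le h01 one_half_pos hRi hR hR0 x hx]
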